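/- arXiv:1002.4404 — 2 statements merged into one kernel-verified Lean document; each statement's English description precedes it below -/
import Mathlib

section
/- With A(x) as above, the operator (P_f μ)(x) = (f(x)/A(x)²) ∫_G χ(g) f(gx) μ(gx) dg on L²(M, Λ*T*M) is idempotent: P_f² = P_f. -/
/-!
Right invariance of `ν` and multiplicativity of `χ` give `A(gx)² = χ(g)⁻¹ A(x)²` and the same
law for `I(x) = ∫_G χ(h) f(hx) μ(hx) dh`, so `P_f μ (gx) = f(gx) A(x)⁻² I(x)`: along each orbit
`P_f μ` is `f` times a constant vector. Feeding this back into `P_f` produces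
`f(x) A(x)⁻² · (A(x)² A(x)⁻² I(x)) = P_f μ (x)`, the integral of `χ(g) f(gx)²` being `A(x)²`.
-/

open scoped ENNReal
open MeasureTheory

section RightInvariant

variable {G : Type*} [Group G] [MeasurableSpace G] {ν : Measure G}
  {F : Type*} [NormedAddCommGroup F] [NormedSpace ℝ F]

theorem integral_comp_mul_right_of_measurePreserving
    (hright : ∀ h : G, MeasurePreserving (fun g : G => g * h) ν ν)
    (g : G) (φ : G → F) : ∫ h, φ (h * g) ∂ν = ∫ h, φ h ∂ν := by
  let e : G ≃ᵐ G :=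
    { toEquiv := Equiv.mulRight g
      measurable_toFun := (hright g).measurable
      measurable_invFun := (hright g⁻¹).measurable }
  exact (hright g).integral_comp e.measurableEmbedding φ

theorem integral_smul_comp_smul_smul {M : Type*} [MulAction G M]
    (hright : ∀ h : G, MeasurePreserving (fun g : G => g * h) ν ν)
    {χ : G → ℝ} (hχne : ∀ g, χ g ≠ 0) (hχmul : ∀ g h, χ (g * h) = χ g * χ h)
    (u : M → F) (g : G) (y : M) :
    ∫ h, χ h • u (h • g • y) ∂ν = (χ g)⁻¹ • ∫ h, χ h • u (h • y) ∂ν := by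
  have hshift : ∀ h, χ h • u (h • g • y) = (χ g)⁻¹ • (χ (h * g) • u ((h * g) • y)) := by
    intro h
    rw [hχmul, smul_smul (χ g)⁻¹, mul_left_comm, inv_mul_cancel₀ (hχne g), mul_one, mul_smul h g y]
  simp_rw [hshift]
  rw [integral_smul, integral_comp_mul_right_of_measurePreserving hright g
    (fun k => χ k • u (k • y))]

end RightInvariant

theorem stmt7_general (G M E : Type*) [Group G] [MeasurableSpace G] [MeasurableSpace M]
    [MulAction G M] [NormedAddCommGroup E] [InnerProductSpace ℝ E] [CompleteSpace E]
    (ν : Measure G) (μM : Measure M)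
    (hright : ∀ h : G, MeasurePreserving (fun g : G => g * h) ν ν)
    (χ : G → ℝ) (hχpos : ∀ g : G, 0 < χ g)
    (hχmul : ∀ g h : G, χ (g * h) = χ g * χ h)
    (f : M → ℝ) (A2 : M → ℝ)
    (hA2 : ∀ x : M, A2 x = ∫ g, χ g * f (g • x) ^ 2 ∂ν)
    (P : (M → E) → (M → E))
    (hP : ∀ (w : M → E) (x : M),
      P w x = (f x / A2 x) • ∫ g, (χ g * f (g • x)) • w (g • x) ∂ν) :
    ∀ w : M → E, MemLp w 2 μM → P (P w) = P w := by
  intro w _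
  funext x
  have hχne g : χ g ≠ 0 := (hχpos g).ne'
  set I : M → E := fun y => ∫ g, (χ g * f (g • y)) • w (g • y) ∂ν with hI_def
  have hI g : I (g • x) = (χ g)⁻¹ • I x := by
    simp only [hI_def, mul_smul]
    exact integral_smul_comp_smul_smul hright hχne hχmul (fun y => f y • w y) g x
  have hA g : A2 (g • x) = (χ g)⁻¹ * A2 x := by
    simp only [hA2, ← smul_eq_mul (a := χ _)]
    exact integral_smul_comp_smul_smul hright hχne hχmul (fun y => f y ^ 2) g x
  have hPw y : P w y = (f y / A2 y) • I y := hP w y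
  have hPw_orbit g : (χ g * f (g • x)) • P w (g • x) = (χ g * f (g • x) ^ 2 / A2 x) • I x := by
    rw [hPw, hA, hI, smul_smul, smul_smul]
    congr 1
    field_simp [hχne g]
  -- `A2 x` may vanish: `a / (a * a) = a⁻¹` holds in any group with zero.
  rw [hP, hPw, integral_congr_ae (.of_forall hPw_orbit), integral_smul_const, integral_div, ← hA2,
    smul_smul, div_mul_div_comm, mul_div_assoc, div_self_mul_self', ← div_eq_mul_inv]

/-- With `A(x)² = ∫_G χ(g) f(gx)² dg > 0` as before, the operator
`(P_f μ)(x) = (f(x)/A(x)²) ∫_G χ(g) f(gx) μ(gx) dg` on `L²(M, Λ*T*M)`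
(forms abstracted as `L²` functions with values in an inner product space `E`)
is idempotent: `P_f² = P_f`. -/
theorem stmt7 (G M E : Type*) [Group G] [MeasurableSpace G] [MeasurableSpace M]
    [MulAction G M] [NormedAddCommGroup E] [InnerProductSpace ℝ E] [CompleteSpace E]
    (ν : Measure G) (μM : Measure M)
    (hright : ∀ h : G, MeasurePreserving (fun g : G => g * h) ν ν)
    (hμM : ∀ g : G, MeasurePreserving (fun x : M => g • x) μM μM)
    (χ : G → ℝ) (hχpos : ∀ g : G, 0 < χ g)
    (hχmul : ∀ g h : G, χ (g * h) = χ g * χ h)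
    (hχinv : ∀ φ : G → ℝ≥0∞, ∫⁻ g, φ g⁻¹ ∂ν = ∫⁻ g, ENNReal.ofReal (χ g) * φ g ∂ν)
    (f : M → ℝ) (A2 : M → ℝ)
    (hA2 : ∀ x : M, A2 x = ∫ g, χ g * f (g • x) ^ 2 ∂ν)
    (hA2pos : ∀ x : M, 0 < A2 x)
    (P : (M → E) → (M → E))
    (hP : ∀ (w : M → E) (x : M),
      P w x = (f x / A2 x) • ∫ g, (χ g * f (g • x)) • w (g • x) ∂ν) :
    ∀ w : M → E, MemLp w 2 μM → P (P w) = P w :=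
  stmt7_general G M E ν μM hright χ hχpos hχmul f A2 hA2 P hP
end

section
/- In the abstract Hodge setting, the induced map H from the cohomology ker(d_f)/Im(d_f) to the harmonic space ker Δ̃ is a linear isomorphism. Consequently, if ker Δ̃ is finite dimensional, then the cohomology ker(d_f)/Im(d_f) is finite dimensional. -/
open scoped RealInnerProductSpace

/-!
The projection `π` sends a closed form `x` to a harmonic form in its class: since the Green
operator commutes with `d`, `Gr x` is closed, so `x - π x = Δ (Gr x) = d (d* (Gr x))`.
It is onto because harmonic forms are closed and fixed by `π`. A harmonic form `h = d z`
vanishes since `‖h‖² = ⟪d z, h⟫ = ⟪z, d* h⟫ = 0`; hence `π x = 0` exactly when `x` is exact.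
-/

namespace AbstractHodge

variable {H : Type*} [NormedAddCommGroup H] [InnerProductSpace ℝ H]
  {d dstar Δ π Gr : H →ₗ[ℝ] H}

theorem sub_proj_eq_d_dstar_green
    (hΔ : ∀ x : H, Δ x = d (dstar x) + dstar (d x))
    (hGr : ∀ x : H, Δ (Gr x) = x - π x) (hGrd : ∀ x : H, d (Gr x) = Gr (d x))
    {x : H} (hx : d x = 0) : x - π x = d (dstar (Gr x)) := by
  have hGx : d (Gr x) = 0 := by rw [hGrd, hx, map_zero]
  rw [← hGr, hΔ, hGx, map_zero, add_zero]

theorem eq_zero_of_harmonic_of_mem_range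
    (hadj : ∀ x y : H, ⟪d x, y⟫ = ⟪x, dstar y⟫)
    (hker_dstar : ∀ x : H, Δ x = 0 → dstar x = 0)
    {h : H} (hh : Δ h = 0) (hrange : h ∈ LinearMap.range d) : h = 0 := by
  obtain ⟨z, rfl⟩ := hrange
  rw [← inner_self_eq_zero (𝕜 := ℝ)]
  nth_rewrite 1 [hadj]
  rw [hker_dstar _ hh, inner_zero_right]

variable (d Δ π) in
def harmonicPart (hπker : ∀ x : H, Δ (π x) = 0) :
    LinearMap.ker d →ₗ[ℝ] LinearMap.ker Δ :=
  (π.comp (LinearMap.ker d).subtype).codRestrict (LinearMap.ker Δ) fun x => hπker x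

theorem harmonicPart_surjective (hπker : ∀ x : H, Δ (π x) = 0)
    (hπid : ∀ x : H, Δ x = 0 → π x = x) (hker_d : ∀ x : H, Δ x = 0 → d x = 0) :
    Function.Surjective (harmonicPart d Δ π hπker) := fun y =>
  ⟨⟨y, hker_d y y.2⟩, Subtype.ext (hπid y y.2)⟩

theorem ker_harmonicPart
    (hadj : ∀ x y : H, ⟪d x, y⟫ = ⟪x, dstar y⟫)
    (hΔ : ∀ x : H, Δ x = d (dstar x) + dstar (d x))
    (hπker : ∀ x : H, Δ (π x) = 0)
    (hGr : ∀ x : H, Δ (Gr x) = x - π x) (hGrd : ∀ x : H, d (Gr x) = Gr (d x))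
    (hker_dstar : ∀ x : H, Δ x = 0 → dstar x = 0) :
    LinearMap.ker (harmonicPart d Δ π hπker) =
      Submodule.comap (LinearMap.ker d).subtype (LinearMap.range d) := by
  ext ⟨x, hx⟩
  have hsplit : x - π x = d (dstar (Gr x)) := sub_proj_eq_d_dstar_green hΔ hGr hGrd hx
  simp only [LinearMap.mem_ker, Submodule.mem_comap, Submodule.coe_subtype]
  rw [← Subtype.coe_inj]
  change π x = 0 ↔ x ∈ LinearMap.range d
  constructor
  · intro hπx
    exact ⟨dstar (Gr x), by rw [← hsplit, hπx, sub_zero]⟩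
  · rintro ⟨z, rfl⟩
    refine eq_zero_of_harmonic_of_mem_range hadj hker_dstar (hπker _) ⟨z - dstar (Gr (d z)), ?_⟩
    rw [map_sub, ← hsplit]
    abel

end AbstractHodge

open AbstractHodge in
theorem stmt15_general {H : Type*} [NormedAddCommGroup H] [InnerProductSpace ℝ H]
    (d dstar Δ π Gr : H →ₗ[ℝ] H)
    (hadj : ∀ x y : H, ⟪d x, y⟫ = ⟪x, dstar y⟫)
    (hΔ : ∀ x : H, Δ x = d (dstar x) + dstar (d x))
    (hπker : ∀ x : H, Δ (π x) = 0)
    (hπid : ∀ x : H, Δ x = 0 → π x = x)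
    (hGr : ∀ x : H, Δ (Gr x) = x - π x)
    (hGrd : ∀ x : H, d (Gr x) = Gr (d x))
    (hker_d : ∀ x : H, Δ x = 0 → d x = 0)
    (hker_dstar : ∀ x : H, Δ x = 0 → dstar x = 0) :
    (∃ e : (↥(LinearMap.ker d) ⧸
        Submodule.comap (LinearMap.ker d).subtype (LinearMap.range d)) ≃ₗ[ℝ]
        ↥(LinearMap.ker Δ),
      ∀ x : ↥(LinearMap.ker d), ((e (Submodule.Quotient.mk x)) : H) = π x) ∧
    (FiniteDimensional ℝ ↥(LinearMap.ker Δ) →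
      FiniteDimensional ℝ (↥(LinearMap.ker d) ⧸
        Submodule.comap (LinearMap.ker d).subtype (LinearMap.range d))) := by
  let e := (Submodule.quotEquivOfEq _ _
      (ker_harmonicPart hadj hΔ hπker hGr hGrd hker_dstar).symm).trans
    ((harmonicPart d Δ π hπker).quotKerEquivOfSurjective
      (harmonicPart_surjective hπker hπid hker_d))
  exact ⟨⟨e, fun _ => rfl⟩, fun _ => e.symm.finiteDimensional⟩

/-- In the abstract Hodge setting (Hilbert space `H`, `d` with
`d² = 0` and adjoint `d*`, Laplacian `Δ̃ = dd* + d*d` with orthogonal Hodge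
decomposition `H = ker Δ̃ ⊕ Im Δ̃`, projection `π` onto `ker Δ̃`, Green
operator `𝔊` commuting with `d`, and `ker Δ̃ ⊆ ker d ∩ ker d*`), the induced
map `H` (given by `π`) from the cohomology `ker d / Im d` to the harmonic
space `ker Δ̃` is a linear isomorphism.  Consequently, if `ker Δ̃` is finite
dimensional, then the cohomology `ker d / Im d` is finite dimensional. -/
theorem stmt15 {H : Type*} [NormedAddCommGroup H] [InnerProductSpace ℝ H]
    (d dstar Δ π Gr : H →ₗ[ℝ] H)
    (hd2 : ∀ x : H, d (d x) = 0)
    (hadj : ∀ x y : H, ⟪d x, y⟫ = ⟪x, dstar y⟫)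
    (hΔ : ∀ x : H, Δ x = d (dstar x) + dstar (d x))
    (hπker : ∀ x : H, Δ (π x) = 0)
    (hπid : ∀ x : H, Δ x = 0 → π x = x)
    (hGr : ∀ x : H, Δ (Gr x) = x - π x)
    (hGrd : ∀ x : H, d (Gr x) = Gr (d x))
    (hker_d : ∀ x : H, Δ x = 0 → d x = 0)
    (hker_dstar : ∀ x : H, Δ x = 0 → dstar x = 0) :
    (∃ e : (↥(LinearMap.ker d) ⧸
        Submodule.comap (LinearMap.ker d).subtype (LinearMap.range d)) ≃ₗ[ℝ]
        ↥(LinearMap.ker Δ),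
      ∀ x : ↥(LinearMap.ker d), ((e (Submodule.Quotient.mk x)) : H) = π x) ∧
    (FiniteDimensional ℝ ↥(LinearMap.ker Δ) →
      FiniteDimensional ℝ (↥(LinearMap.ker d) ⧸
        Submodule.comap (LinearMap.ker d).subtype (LinearMap.range d))) :=
  stmt15_general d dstar Δ π Gr hadj hΔ hπker hπid hGr hGrd hker_d hker_dstar
end
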